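/- With φ_a(z) = ₁φ₁(0; qa; q, z) and ψ_a(z) = ₁φ₁(0; q a^{-1}; q, a^{-1} z), for all a with q < a < q^{-1}, a ≠ 1, and all z ∈ ℂ: φ_a(z) ψ_a(qz) − a ψ_a(z) φ_a(qz) = 1 − a. -/

import Mathlib

open Finset Filter Topology

/-- Finite q-Pochhammer symbol `(z;q)_k = ∏_{j<k} (1 - z qʲ)`. -/
noncomputable def qPoch (z q : ℂ) (k : ℕ) : ℂ := ∏ j ∈ range k, (1 - z * q ^ j)

/-- Basic confluent hypergeometric series
`₁φ₁(0;b;q,z) = ∑ₖ (-1)ᵏ q^{k(k-1)/2} zᵏ / ((b;q)ₖ (q;q)ₖ)`. -/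
noncomputable def phi11 (b q z : ℂ) : ℂ :=
  ∑' k : ℕ, (-1) ^ k * q ^ (k * (k - 1) / 2 : ℕ) * z ^ k / (qPoch b q k * qPoch q q k)

/-!
Both `φ_a` and `ψ_a` satisfy second-order q-difference equations, read off from the
recursion of the coefficients of `₁φ₁`, and these make the q-Casoratian
`W(z) = φ_a(z) ψ_a(qz) − a ψ_a(z) φ_a(qz)` invariant under `z ↦ qz`. The factor `q^{k(k-1)/2}`
makes the series entire, so `W` is continuous and `W(z) = lim W(qⁿz) = W(0) = 1 − a`.
-/

lemma qPoch_succ (z q : ℂ) (k : ℕ) : qPoch z q (k + 1) = qPoch z q k * (1 - z * q ^ k) :=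
  prod_range_succ _ k

lemma one_sub_norm_pow_le_norm_qPoch {z q : ℂ} (hz : ‖z‖ ≤ 1) (hq : ‖q‖ ≤ 1) (k : ℕ) :
    (1 - ‖z‖) ^ k ≤ ‖qPoch z q k‖ := by
  rw [qPoch, norm_prod, ← card_range k, ← prod_const, card_range]
  refine prod_le_prod (fun _ _ => sub_nonneg.2 hz) fun j _ => ?_
  calc 1 - ‖z‖ ≤ ‖(1 : ℂ)‖ - ‖z * q ^ j‖ := by
        rw [norm_one, norm_mul, norm_pow]
        gcongr
        exact mul_le_of_le_one_right (norm_nonneg z) (pow_le_one₀ (norm_nonneg q) hq)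
    _ ≤ ‖1 - z * q ^ j‖ := norm_sub_norm_le _ _

lemma qPoch_ne_zero {z q : ℂ} (hz : ‖z‖ < 1) (hq : ‖q‖ ≤ 1) (k : ℕ) : qPoch z q k ≠ 0 :=
  norm_pos_iff.1 <| (pow_pos (sub_pos.2 hz) k).trans_le (one_sub_norm_pow_le_norm_qPoch hz.le hq k)

noncomputable def phi11Coeff (b q : ℂ) (k : ℕ) : ℂ :=
  (-1) ^ k * q ^ (k * (k - 1) / 2) / (qPoch b q k * qPoch q q k)

lemma phi11Coeff_zero (b q : ℂ) : phi11Coeff b q 0 = 1 := by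
  simp [phi11Coeff, qPoch]

lemma phi11_eq_tsum (b q z : ℂ) : phi11 b q z = ∑' k, phi11Coeff b q k * z ^ k :=
  tsum_congr fun k => by rw [phi11Coeff]; ring

lemma phi11Coeff_succ_mul {b q : ℂ} {k : ℕ} (hb : qPoch b q (k + 1) ≠ 0)
    (hq : qPoch q q (k + 1) ≠ 0) :
    phi11Coeff b q (k + 1) * ((1 - b * q ^ k) * (1 - q ^ (k + 1)))
      = -q ^ k * phi11Coeff b q k := by
  rw [qPoch_succ, mul_ne_zero_iff] at hb hq
  rw [pow_succ', phi11Coeff, phi11Coeff, qPoch_succ, qPoch_succ, Nat.triangle_succ, pow_add,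
    mul_mul_mul_comm, ← div_div, div_mul_cancel₀ _ (mul_ne_zero hb.2 hq.2)]
  ring

lemma norm_phi11Coeff_le {b q : ℂ} (hb : ‖b‖ < 1) (hq : ‖q‖ < 1) (k : ℕ) :
    ‖phi11Coeff b q k‖ ≤ ‖q‖ ^ (k * (k - 1) / 2) / ((1 - ‖b‖) * (1 - ‖q‖)) ^ k := by
  have hb' : 0 < 1 - ‖b‖ := sub_pos.2 hb
  have hq' : 0 < 1 - ‖q‖ := sub_pos.2 hq
  rw [phi11Coeff, norm_div, norm_mul, norm_mul, norm_pow, norm_pow, norm_neg, norm_one, one_pow,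
    one_mul, mul_pow]
  gcongr
  · exact one_sub_norm_pow_le_norm_qPoch hb.le hq.le k
  · exact one_sub_norm_pow_le_norm_qPoch hq.le hq.le k

lemma summable_pow_triangle_mul_pow {r : ℝ} (hr0 : 0 ≤ r) (hr1 : r < 1) (R : ℝ) :
    Summable fun k : ℕ => r ^ (k * (k - 1) / 2) * R ^ k := by
  refine summable_of_ratio_norm_eventually_le one_half_lt_one ?_
  have h : Tendsto (fun k : ℕ => r ^ k * |R|) atTop (𝓝 0) := by
    simpa using (tendsto_pow_atTop_nhds_zero_of_lt_one hr0 hr1).mul_const |R|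
  filter_upwards [h.eventually_lt_const one_half_pos] with k hk
  rw [Nat.triangle_succ, show r ^ (k * (k - 1) / 2 + k) * R ^ (k + 1)
      = (r ^ k * R) * (r ^ (k * (k - 1) / 2) * R ^ k) by ring,
    norm_mul, Real.norm_eq_abs (r ^ k * R), abs_mul, abs_of_nonneg (pow_nonneg hr0 k)]
  exact mul_le_mul_of_nonneg_right hk.le (norm_nonneg _)

lemma norm_phi11Coeff_mul_pow_le {b q z : ℂ} {R : ℝ} (hb : ‖b‖ < 1) (hq : ‖q‖ < 1)
    (hz : ‖z‖ ≤ R) (k : ℕ) :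
    ‖phi11Coeff b q k * z ^ k‖
      ≤ ‖q‖ ^ (k * (k - 1) / 2) * (R / ((1 - ‖b‖) * (1 - ‖q‖))) ^ k := by
  have hd : 0 < (1 - ‖b‖) * (1 - ‖q‖) := mul_pos (sub_pos.2 hb) (sub_pos.2 hq)
  calc ‖phi11Coeff b q k * z ^ k‖
      ≤ ‖q‖ ^ (k * (k - 1) / 2) / ((1 - ‖b‖) * (1 - ‖q‖)) ^ k * R ^ k := by
        rw [norm_mul, norm_pow]
        exact mul_le_mul (norm_phi11Coeff_le hb hq k) (pow_le_pow_left₀ (norm_nonneg z) hz k)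
          (by positivity) (div_nonneg (by positivity) (pow_nonneg hd.le k))
    _ = ‖q‖ ^ (k * (k - 1) / 2) * (R / ((1 - ‖b‖) * (1 - ‖q‖))) ^ k := by ring

lemma hasSum_phi11 {b q : ℂ} (hb : ‖b‖ < 1) (hq : ‖q‖ < 1) (z : ℂ) :
    HasSum (fun k => phi11Coeff b q k * z ^ k) (phi11 b q z) := by
  rw [phi11_eq_tsum]
  exact (Summable.of_norm_bounded (summable_pow_triangle_mul_pow (norm_nonneg q) hq _)
    (norm_phi11Coeff_mul_pow_le hb hq le_rfl)).hasSum

lemma phi11_zero (b q : ℂ) : phi11 b q 0 = 1 := by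
  rw [phi11_eq_tsum, tsum_eq_single 0 fun k hk => by simp [zero_pow hk]]
  simp [phi11Coeff_zero]

lemma continuous_phi11 {b q : ℂ} (hb : ‖b‖ < 1) (hq : ‖q‖ < 1) : Continuous (phi11 b q) := by
  have hball : ∀ R, ContinuousOn (phi11 b q) (Metric.ball 0 R) := fun R => by
    simp only [funext (phi11_eq_tsum b q)]
    exact continuousOn_tsum (fun k => (continuous_const.mul (continuous_pow k)).continuousOn)
      (summable_pow_triangle_mul_pow (norm_nonneg q) hq _)
      fun k z hz => norm_phi11Coeff_mul_pow_le hb hq (mem_ball_zero_iff.1 hz).le k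
  exact continuous_iff_continuousAt.2 fun z =>
    (hball (‖z‖ + 1)).continuousAt (Metric.isOpen_ball.mem_nhds (by simp))

theorem phi11_qdiff {ρ q : ℂ} (hb : ‖q * ρ‖ < 1) (hq : ‖q‖ < 1) (z : ℂ) :
    phi11 (q * ρ) q z + (z - 1 - ρ) * phi11 (q * ρ) q (q * z)
      + ρ * phi11 (q * ρ) q (q ^ 2 * z) = 0 := by
  set c := phi11Coeff (q * ρ) q
  have hcomb : HasSum (fun k => c k * ((1 - q ^ k) * (1 - ρ * q ^ k)) * z ^ k)
      (phi11 (q * ρ) q z - (1 + ρ) * phi11 (q * ρ) q (q * z)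
        + ρ * phi11 (q * ρ) q (q ^ 2 * z)) := by
    refine (((hasSum_phi11 hb hq z).sub ((hasSum_phi11 hb hq (q * z)).mul_left (1 + ρ))).add
      ((hasSum_phi11 hb hq (q ^ 2 * z)).mul_left ρ)).congr_fun fun k => ?_
    simp only [mul_pow]
    ring
  have hshift : HasSum (fun k => c (k + 1) * ((1 - q ^ (k + 1)) * (1 - ρ * q ^ (k + 1)))
      * z ^ (k + 1)) (-(z * phi11 (q * ρ) q (q * z))) := by
    refine ((hasSum_phi11 hb hq (q * z)).mul_left z).neg.congr_fun fun k => ?_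
    have hc : c (k + 1) * ((1 - q * ρ * q ^ k) * (1 - q ^ (k + 1))) = -q ^ k * c k :=
      phi11Coeff_succ_mul (qPoch_ne_zero hb hq.le _) (qPoch_ne_zero hq hq.le _)
    linear_combination z ^ (k + 1) * hc
  have h := ((hasSum_nat_add_iff
    (f := fun k => c k * ((1 - q ^ k) * (1 - ρ * q ^ k)) * z ^ k) 1).1 hshift).unique hcomb
  simp only [range_one, sum_singleton, pow_zero, sub_self, zero_mul, mul_zero] at h
  linear_combination -h

theorem phi11_inv_mul_qdiff {ρ q : ℂ} (hρ : ρ ≠ 0) (hb : ‖q * ρ⁻¹‖ < 1) (hq : ‖q‖ < 1)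
    (w : ℂ) :
    ρ * phi11 (q * ρ⁻¹) q (ρ⁻¹ * w) + (w - ρ - 1) * phi11 (q * ρ⁻¹) q (ρ⁻¹ * (q * w))
      + phi11 (q * ρ⁻¹) q (ρ⁻¹ * (q ^ 2 * w)) = 0 := by
  have h := phi11_qdiff hb hq (ρ⁻¹ * w)
  rw [mul_left_comm q, mul_left_comm (q ^ 2)] at h
  field_simp at h ⊢
  linear_combination h

theorem apply_eq_apply_zero_of_apply_mul_eq {𝕜 E : Type*} [NormedRing 𝕜] [TopologicalSpace E]
    [T2Space E] {f : 𝕜 → E} {q : 𝕜} (hf : ContinuousAt f 0) (hq : ‖q‖ < 1)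
    (h : ∀ z, f (q * z) = f z) (z : 𝕜) : f z = f 0 := by
  have hiter : ∀ n : ℕ, f (q ^ n * z) = f z := fun n => by
    induction n with
    | zero => simp
    | succ n ih => rw [pow_succ', mul_assoc, h, ih]
  have hlim : Tendsto (fun n : ℕ => q ^ n * z) atTop (𝓝 0) := by
    simpa using (tendsto_pow_atTop_nhds_zero_of_norm_lt_one hq).mul_const z
  have hlim' := hf.tendsto.comp hlim
  simp only [Function.comp_def, hiter] at hlim'
  exact tendsto_nhds_unique tendsto_const_nhds hlim'

theorem stmt9_general (a q : ℝ) (hq0 : 0 < q) (hq1 : q < 1)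
    (haq : q < a) (haq' : a < q⁻¹)
    (φ ψ : ℂ → ℂ)
    (hφ : ∀ z : ℂ, φ z = phi11 ((q : ℂ) * a) q z)
    (hψ : ∀ z : ℂ, ψ z = phi11 ((q : ℂ) * (a : ℂ)⁻¹) q ((a : ℂ)⁻¹ * z))
    (z : ℂ) :
    φ z * ψ ((q : ℂ) * z) - (a : ℂ) * ψ z * φ ((q : ℂ) * z) = 1 - (a : ℂ) := by
  have ha0 : 0 < a := hq0.trans haq
  have haC : (a : ℂ) ≠ 0 := by exact_mod_cast ha0.ne'
  have hqC : ‖(q : ℂ)‖ < 1 := by rwa [Complex.norm_of_nonneg hq0.le]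
  have hb : ‖(q : ℂ) * a‖ < 1 := by
    rw [← Complex.ofReal_mul, Complex.norm_of_nonneg (by positivity)]
    calc q * a < q * q⁻¹ := mul_lt_mul_of_pos_left haq' hq0
      _ = 1 := mul_inv_cancel₀ hq0.ne'
  have hb' : ‖(q : ℂ) * (a : ℂ)⁻¹‖ < 1 := by
    rw [← Complex.ofReal_inv, ← Complex.ofReal_mul, Complex.norm_of_nonneg (by positivity),
      ← div_eq_mul_inv]
    exact (div_lt_one ha0).2 haq
  have hφq : ∀ w, φ w + (w - 1 - a) * φ (q * w) + a * φ (q ^ 2 * w) = 0 := fun w => by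
    simpa only [hφ] using phi11_qdiff hb hqC w
  have hψq : ∀ w, a * ψ w + (w - a - 1) * ψ (q * w) + ψ (q ^ 2 * w) = 0 := fun w => by
    simpa only [hψ] using phi11_inv_mul_qdiff haC hb' hqC w
  set W : ℂ → ℂ := fun w => φ w * ψ (q * w) - a * ψ w * φ (q * w) with hW
  have hWq : ∀ w, W (q * w) = W w := fun w => by
    simp only [hW, ← mul_assoc (q : ℂ), ← sq]
    linear_combination φ (q * w) * hψq w - ψ (q * w) * hφq w
  have hφc : Continuous φ := funext hφ ▸ continuous_phi11 hb hqC
  have hψc : Continuous ψ := funext hψ ▸ (continuous_phi11 hb' hqC).comp (continuous_const_mul _)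
  calc W z = W 0 := apply_eq_apply_zero_of_apply_mul_eq (by fun_prop) hqC hWq z
    _ = 1 - a := by simp [hW, hφ, hψ, phi11_zero]

/-- Wronskian-type identity: with `φ_a(z) = ₁φ₁(0;qa;q,z)` and
`ψ_a(z) = ₁φ₁(0;qa⁻¹;q,a⁻¹z)`, one has
`φ_a(z) ψ_a(qz) − a ψ_a(z) φ_a(qz) = 1 − a` for `q < a < q⁻¹`, `a ≠ 1`. -/
theorem stmt9 (a q : ℝ) (hq0 : 0 < q) (hq1 : q < 1)
    (haq : q < a) (haq' : a < q⁻¹) (ha1 : a ≠ 1)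
    (φ ψ : ℂ → ℂ)
    (hφ : ∀ z : ℂ, φ z = phi11 ((q : ℂ) * a) q z)
    (hψ : ∀ z : ℂ, ψ z = phi11 ((q : ℂ) * (a : ℂ)⁻¹) q ((a : ℂ)⁻¹ * z))
    (z : ℂ) :
    φ z * ψ ((q : ℂ) * z) - (a : ℂ) * ψ z * φ ((q : ℂ) * z) = 1 - (a : ℂ) :=
  stmt9_general a q hq0 hq1 haq haq' φ ψ hφ hψ z
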